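/- Let ψ : ℝ \ {-1, 0, 1} → ℝ be defined by ψ(x) = x / √|1 - x²|. Then ψ is differentiable on its domain and satisfies ψ'(x)(x - x³) = ψ(x) for all x ∉ {-1, 0, 1}; moreover, ψ has no zeros on its domain, and extending ψ by ψ(0) = 0 gives a function whose unique zero is the unstable fixed point x = 0. -/

import Mathlib

lemma koopman_aux (x : ℝ) (hx1 : 1 - x ^ 2 ≠ 0) :
    ∃ d : ℝ, HasDerivAt (fun y : ℝ => y / Real.sqrt |1 - y ^ 2|) d x ∧
      d * (x - x ^ 3) = x / Real.sqrt |1 - x ^ 2| := by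
  rcases hx1.lt_or_gt with h | h
  · -- 1 - x^2 < 0, i.e. |1-y^2| = y^2 - 1 near x
    set u := x ^ 2 - 1 with hu
    have hu0 : 0 < u := by nlinarith
    have hs : Real.sqrt u ≠ 0 := by positivity
    have hinner : HasDerivAt (fun y : ℝ => y ^ 2 - 1) (2 * x) x := by
      simpa using ((hasDerivAt_pow 2 x).sub_const 1)
    have hg : HasDerivAt (fun y : ℝ => Real.sqrt (y ^ 2 - 1))
        (1 / (2 * Real.sqrt u) * (2 * x)) x :=
      (Real.hasDerivAt_sqrt hu0.ne').comp x hinner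
    have hf : HasDerivAt (fun y : ℝ => y / Real.sqrt (y ^ 2 - 1))
        ((1 * Real.sqrt u - x * (1 / (2 * Real.sqrt u) * (2 * x))) / (Real.sqrt u) ^ 2) x :=
      (hasDerivAt_id x).div hg hs
    have heq : (fun y : ℝ => y / Real.sqrt |1 - y ^ 2|)
        =ᶠ[nhds x] (fun y : ℝ => y / Real.sqrt (y ^ 2 - 1)) := by
      have hopen : IsOpen {y : ℝ | 1 - y ^ 2 < 0} :=
        isOpen_lt (by continuity) continuous_const
      filter_upwards [hopen.mem_nhds (by simpa using h)] with y hy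
      rw [abs_of_neg hy]; ring_nf
    refine ⟨_, hf.congr_of_eventuallyEq heq, ?_⟩
    rw [abs_of_neg h]
    have hsq : Real.sqrt u ^ 2 = u := Real.sq_sqrt hu0.le
    have : -(1 - x ^ 2) = x ^ 2 - 1 := by ring
    rw [this, ← hu]
    field_simp
    linear_combination (-x^3) * hsq + (-x^3) * hu
  · set u := 1 - x ^ 2 with hu
    have hu0 : 0 < u := h
    have hs : Real.sqrt u ≠ 0 := by positivity
    have hinner : HasDerivAt (fun y : ℝ => 1 - y ^ 2) (-(2 * x)) x := by
      simpa using ((hasDerivAt_pow 2 x).const_sub 1)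
    have hg : HasDerivAt (fun y : ℝ => Real.sqrt (1 - y ^ 2))
        (1 / (2 * Real.sqrt u) * -(2 * x)) x :=
      (Real.hasDerivAt_sqrt hu0.ne').comp x hinner
    have hf : HasDerivAt (fun y : ℝ => y / Real.sqrt (1 - y ^ 2))
        ((1 * Real.sqrt u - x * (1 / (2 * Real.sqrt u) * -(2 * x))) / (Real.sqrt u) ^ 2) x :=
      (hasDerivAt_id x).div hg hs
    have heq : (fun y : ℝ => y / Real.sqrt |1 - y ^ 2|)
        =ᶠ[nhds x] (fun y : ℝ => y / Real.sqrt (1 - y ^ 2)) := by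
      have hopen : IsOpen {y : ℝ | 0 < 1 - y ^ 2} :=
        isOpen_lt continuous_const (by continuity)
      filter_upwards [hopen.mem_nhds h] with y hy
      rw [abs_of_pos hy]
    refine ⟨_, hf.congr_of_eventuallyEq heq, ?_⟩
    rw [abs_of_pos h]
    have hsq : Real.sqrt u ^ 2 = u := Real.sq_sqrt hu0.le
    field_simp
    linear_combination (-x^3) * hsq + (-x^3) * hu

/-- ψ(x) = x/√|1-x²| is differentiable away from {-1,0,1}, satisfies the
Koopman eigenfunction equation there, has no zeros on that domain, and its
extension by ψ(0)=0 has its unique zero at the unstable fixed point 0. -/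
theorem koopman_1d_bistable_abs :
    (∀ x : ℝ, x ∉ ({-1, 0, 1} : Set ℝ) →
      DifferentiableAt ℝ (fun y : ℝ => y / Real.sqrt |1 - y ^ 2|) x ∧
      deriv (fun y : ℝ => y / Real.sqrt |1 - y ^ 2|) x * (x - x ^ 3)
        = x / Real.sqrt |1 - x ^ 2| ∧
      x / Real.sqrt |1 - x ^ 2| ≠ 0) ∧
    ((0 : ℝ) / Real.sqrt |1 - (0 : ℝ) ^ 2| = 0) ∧
    (∀ x : ℝ, x ≠ -1 → x ≠ 1 → (x / Real.sqrt |1 - x ^ 2| = 0 ↔ x = 0)) := by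
  refine ⟨?_, by norm_num, ?_⟩
  · intro x hx
    simp only [Set.mem_insert_iff, Set.mem_singleton_iff, not_or] at hx
    obtain ⟨h1, h0, h2⟩ := hx
    have hx1 : 1 - x ^ 2 ≠ 0 := by
      intro hc
      have : (x - 1) * (x + 1) = 0 := by nlinarith
      rcases mul_eq_zero.mp this with h | h
      · exact h2 (by linarith)
      · exact h1 (by linarith)
    obtain ⟨d, hd, hde⟩ := koopman_aux x hx1
    refine ⟨hd.differentiableAt, by rw [hd.deriv]; exact hde, ?_⟩
    exact div_ne_zero h0 (Real.sqrt_ne_zero'.mpr (abs_pos.mpr hx1))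
  · intro x h1 h2
    have hx1 : 1 - x ^ 2 ≠ 0 := by
      intro hc
      have : (x - 1) * (x + 1) = 0 := by nlinarith
      rcases mul_eq_zero.mp this with h | h
      · exact h2 (by linarith)
      · exact h1 (by linarith)
    have hs : Real.sqrt |1 - x ^ 2| ≠ 0 := Real.sqrt_ne_zero'.mpr (abs_pos.mpr hx1)
    rw [div_eq_zero_iff]
    simp [hs]
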